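/- Let q ∈ ℝⁿ, f, k ∈ ℝⁿ with f_i = (γ − g_i)/2 and k_i = 1 − g_i/(2ℓ²) for constants γ ∈ ℝ, ℓ ≠ 0 and a fixed vector g ∈ ℝⁿ. Then qᵀk = (1/ℓ²)·qᵀf + (1 − γ/(2ℓ²))·(qᵀ𝟙); in particular if qᵀ𝟙 = 0 then qᵀk = (1/ℓ²) qᵀf, i.e., the GP-Isomap prediction is a scalar multiple of the S-Isomap prediction. -/
import Mathlib

open Matrix

theorem stmt_12 (n : ℕ) (q f k g : Fin n → ℝ) (γ ℓ : ℝ) (hℓ : ℓ ≠ 0)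
    (hf : ∀ i, f i = (γ - g i) / 2)
    (hk : ∀ i, k i = 1 - g i / (2 * ℓ ^ 2)) :
    q ⬝ᵥ k = (1 / ℓ ^ 2) * (q ⬝ᵥ f) + (1 - γ / (2 * ℓ ^ 2)) * (q ⬝ᵥ fun _ => 1) ∧
      ((q ⬝ᵥ fun _ => 1) = 0 → q ⬝ᵥ k = (1 / ℓ ^ 2) * (q ⬝ᵥ f)) := by
  have h : q ⬝ᵥ k = (1 / ℓ ^ 2) * (q ⬝ᵥ f) + (1 - γ / (2 * ℓ ^ 2)) * (q ⬝ᵥ fun _ => 1) := by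
    simp only [dotProduct, Finset.mul_sum]
    rw [← Finset.sum_add_distrib]
    apply Finset.sum_congr rfl
    intro i _
    rw [hf, hk]
    have h2 : ℓ ^ 2 ≠ 0 := pow_ne_zero _ hℓ
    field_simp
    ring
  exact ⟨h, fun h0 => by rw [h, h0]; ring⟩
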